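/- Let Γ be a colored tree and let A and B be two disjoint finite multisets of edges of Γ. Then Σ_{d ∈ A} w_d = Σ_{d ∈ B} w_d (sums taken with multiplicity in M = Hom(ℤ^g, ℤ)) if and only if A and B can be partitioned into multisets A_1, …, A_r and B_1, …, B_r such that A_l ∼ B_l for every 1 ≤ l ≤ r. -/

import Mathlib

noncomputable section
open Classical

/-- A rose tree whose leaves ("colored vertices") carry labels of type `α` and whose
internal vertices ("uncolored vertices") are unlabelled. -/
inductive CTree (α : Type) : Type
  | leaf (a : α) : CTree α
  | node (ts : List (CTree α)) : CTree α

namespace CTree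

variable {α : Type}

/-- The subtree of `t` at a position `p` (a list of child indices), if it exists. -/
def sub : CTree α → List ℕ → Option (CTree α)
  | t, [] => some t
  | leaf _, _ :: _ => none
  | node ts, i :: p =>
      match ts[i]? with
      | some c => sub c p
      | none => none

/-- All lists of natural numbers of length at most `k` with entries `< m`. -/
def allLists (m : ℕ) : ℕ → List (List ℕ)
  | 0 => [[]]
  | k + 1 => [] :: (List.range m).flatMap (fun i => (allLists m k).map (i :: ·))

/-- The finite set of positions of vertices of `t`. -/
def vertS (t : CTree α) : Finset (List ℕ) :=
  (allLists (sizeOf t) (sizeOf t)).toFinset.filter (fun p => (t.sub p).isSome)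

/-- The finite set of positions of uncolored (internal) vertices of `t`. -/
def uncS (t : CTree α) : Finset (List ℕ) :=
  (allLists (sizeOf t) (sizeOf t)).toFinset.filter (fun p => ∃ ts, t.sub p = some (node ts))

/-- The finite set of positions of colored vertices (leaves) of `t`. -/
def colS (t : CTree α) : Finset (List ℕ) :=
  (allLists (sizeOf t) (sizeOf t)).toFinset.filter (fun p => ∃ a, t.sub p = some (leaf a))

/-- Edges of `t` are identified with the positions of non-root vertices (an edge joins
the vertex at `p ≠ []` to its parent at `p.dropLast`). -/
def edgeS (t : CTree α) : Finset (List ℕ) := (vertS t).erase []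

/-- `t` is a colored tree: every internal vertex has at least one child (so the leaves,
i.e. the childless vertices, are exactly the colored vertices) and the root is
uncolored. -/
def IsColoredTree (t : CTree α) : Prop :=
  (∀ p, t.sub p ≠ some (node ([] : List (CTree α)))) ∧ ∃ ts, t = node ts

/-- The weight `w_d ∈ M` of an edge `d`: the sum of the dual basis vectors `e_u^*`
over uncolored vertices `u` that are descendants of the upper endpoint of `d` but not
descendants of the lower endpoint of `d`. -/
def wt (t : CTree α) (d : List ℕ) : List ℕ → ℤ := fun u =>
  if u ∈ uncS t ∧ d.dropLast <+: u ∧ ¬ d <+: u then 1 else 0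

/-- `s_v ∈ M` : the sum of `e_u^*` over the uncolored descendants `u` of `v`;
`s(Γ) = sv t []`. -/
def sv (t : CTree α) (v : List ℕ) : List ℕ → ℤ := fun u =>
  if u ∈ uncS t ∧ v <+: u then 1 else 0

/-- The pairing between `M = Hom(ℤ^g, ℤ)` and `ℤ^g` (both realized as integer-valued
functions on the uncolored vertices of `t`). -/
def pairZ (t : CTree α) (μ x : List ℕ → ℤ) : ℤ := ∑ p ∈ uncS t, μ p * x p

/-- The pairing between `M` and `ℝ^g`. -/
def pairR (t : CTree α) (μ : List ℕ → ℤ) (x : List ℕ → ℝ) : ℝ :=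
  ∑ p ∈ uncS t, (μ p : ℝ) * x p

/-- The multiset of edges of the (downward) path from the vertex `v` to the vertex `c`;
each edge occurs with multiplicity one. -/
def pathEdges (t : CTree α) (v c : List ℕ) : Multiset (List ℕ) :=
  ((edgeS t).filter (fun d => v <+: d ∧ d ≠ v ∧ d <+: c)).val

/-- The relation `A ∼ B` on multisets of edges: `A` and `B` consist exactly of the edges
of two non-self-crossing paths from a common vertex to two colored vertices. -/
def Sim (t : CTree α) (A B : Multiset (List ℕ)) : Prop :=
  ∃ v ∈ vertS t, ∃ c₁ ∈ colS t, ∃ c₂ ∈ colS t, v <+: c₁ ∧ v <+: c₂ ∧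
    A = pathEdges t v c₁ ∧ B = pathEdges t v c₂

/-- `Y` is a minimally complete subset of the set of edges of `t`: every
(non-self-crossing) path from the root to a colored vertex contains exactly one edge
of `Y`. -/
def MinComplete (t : CTree α) (Y : Finset (List ℕ)) : Prop :=
  Y ⊆ edgeS t ∧ ∀ c ∈ colS t, ∃! d, d ∈ Y ∧ d <+: c

/-- The finite set of minimally complete subsets of the edge set of `t`. -/
def MCfin (t : CTree α) : Finset (Finset (List ℕ)) :=
  (edgeS t).powerset.filter (fun Y => MinComplete t Y)

/-- The dual cone `C(Γ) = {x ∈ ℝ^g | ⟨w_d, x⟩ ≥ 0 for all edges d}`. -/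
def dualCone (t : CTree α) : Set (List ℕ → ℝ) :=
  {x | (∀ p, p ∉ uncS t → x p = 0) ∧ ∀ d ∈ edgeS t, 0 ≤ pairR t (wt t d) x}

/-- The ray spanned by a vector `v`. -/
def ray (v : List ℕ → ℝ) : Set (List ℕ → ℝ) := {x | ∃ c : ℝ, 0 ≤ c ∧ x = c • v}

/-- `F` is a one-dimensional face (extreme ray) of the convex cone `C`. -/
def IsOneDimFace (C F : Set (List ℕ → ℝ)) : Prop :=
  F ⊆ C ∧ (∃ v, v ≠ 0 ∧ F = ray v) ∧
    ∀ x ∈ C, ∀ y ∈ C, x + y ∈ F → x ∈ F ∧ y ∈ F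

/-- The convex cone generated by a set `G ⊆ ℤ^g` inside `ℝ^g`: all finite nonnegative
real combinations of elements of `G`. -/
def coneHull (G : Set (List ℕ → ℤ)) : Set (List ℕ → ℝ) :=
  {x | ∃ (F : Finset (List ℕ → ℤ)) (c : (List ℕ → ℤ) → ℝ),
    ↑F ⊆ G ∧ (∀ v ∈ F, 0 ≤ c v) ∧
    x = ∑ v ∈ F, c v • (fun p => ((v p : ℤ) : ℝ))}

/-- `e_{v_0} ∈ ℤ^g`: the basis vector of the root vertex. -/
def e0 : List ℕ → ℤ := fun p => if p = [] then 1 else 0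

/-- The inclusion `ℤ^{g_i} → ℤ^g` corresponding to the `i`-th principal subtree. -/
def shift (i : ℕ) (f : List ℕ → ℤ) : List ℕ → ℤ := fun p =>
  match p with
  | [] => 0
  | j :: q => if j = i then f q else 0

def isNodeB : CTree α → Bool
  | leaf _ => false
  | node _ => true

/-- The recursively defined set `G(Γ) ⊆ ℤ^g`: `G(Γ)` consists of all vectors
`e_{v₀} + ∑_{i ∈ J} (w_i - e_{v₀})` where `J` ranges over subsets of the set of indices
of non-trivial principal subtrees and `w_i ∈ G(Γ_i)` (in particular if `g = 1` this is
just `{e_{v₀}}`). -/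
def Gset : CTree α → Set (List ℕ → ℤ)
  | leaf _ => ∅
  | node ts =>
      {v | ∃ (J : Finset (Fin ts.length)) (w : Fin ts.length → (List ℕ → ℤ)),
        (∀ i ∈ J, (ts.get i).isNodeB = true ∧ w i ∈ Gset (ts.get i)) ∧
        v = e0 + ∑ i ∈ J, (shift i.1 (w i) - e0)}
  termination_by t => sizeOf t
  decreasing_by
    have h1 : ts.get i ∈ ts := List.get_mem ts i
    have h2 := List.sizeOf_lt_of_mem h1
    simp only [CTree.node.sizeOf_spec]
    omega

/-- Transport of a set of edges of `Γ` to the `i`-th principal subtree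
(`Y ∩ E(Γ_i)`, rewritten in the coordinates of `Γ_i`). -/
def sect (i : ℕ) (Y : Finset (List ℕ)) : Finset (List ℕ) :=
  (Y.filter (fun p => p.head? = some i)).image List.tail

/-- The recursively defined vector `v_Y ∈ ℤ^g` attached to a (minimally complete) set
of edges `Y`: `v_Y = e_{v₀} + ∑_{i ∈ I} (v_{Y_i} - e_{v₀})` where
`I = {i | d_i ∉ Y}` and `Y_i = Y ∩ E(Γ_i)` (if `g = 1` this is just `e_{v₀}`). -/
def vY : CTree α → Finset (List ℕ) → (List ℕ → ℤ)
  | leaf _, _ => 0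
  | node ts, Y =>
      e0 + ∑ i ∈ Finset.univ.filter (fun i : Fin ts.length => [i.1] ∉ Y),
        (shift i.1 (vY (ts.get i) (sect i.1 Y)) - e0)
  termination_by t => sizeOf t
  decreasing_by
    have h1 : ts.get i ∈ ts := List.get_mem ts i
    have h2 := List.sizeOf_lt_of_mem h1
    simp only [CTree.node.sizeOf_spec]
    omega

/-- The set of balanced labellings `X(Γ) ⊆ ℂ^{E(Γ)}`. -/
def Xbal (t : CTree α) : Set (List ℕ → ℂ) :=
  {x | ∀ v ∈ uncS t, ∀ c ∈ colS t, ∀ c' ∈ colS t, v <+: c → v <+: c' →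
    ((pathEdges t v c).map x).prod = ((pathEdges t v c').map x).prod}

/-- `Y ⊆ E(Γ)` is complete: for every finite multiset `A` of edges, the monomial
`∏_{d ∈ A} x_d` vanishes identically on `{x ∈ X(Γ) | x_y = 0 ∀ y ∈ Y}` if and only if
`A` contains at least one edge belonging to `Y`. -/
def CompleteSet (t : CTree α) (Y : Finset (List ℕ)) : Prop :=
  ∀ A : Multiset (List ℕ), (∀ d ∈ A, d ∈ edgeS t) →
    ((∀ x ∈ Xbal t, (∀ y ∈ Y, x y = 0) → (A.map x).prod = 0) ↔ ∃ d ∈ A, d ∈ Y)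

/-- A partition of a type `I`: a finite collection of nonempty pairwise disjoint
subsets covering `I`. -/
def IsPart {I : Type} (P : Finset (Finset I)) : Prop :=
  (∀ S ∈ P, S ≠ ∅) ∧ ∀ a : I, ∃! S, S ∈ P ∧ a ∈ S

/-- The tree with a single uncolored vertex whose children are the colored vertices
labelled by the elements of `S`. -/
def blockTree {I : Type} (S : Finset I) : CTree I := node (S.toList.map leaf)

/-- The colored tree `Γ_P` of a partition `P`: the root has one child for each block
`S ∈ P`, an uncolored vertex whose children are colored vertices labelled by the
elements of `S`. -/
def gammaP {I : Type} (P : Finset (Finset I)) : CTree I := node (P.toList.map blockTree)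

/-- A tree homomorphism `t → t'`, described by a map `f` on vertex positions: it sends
root to root, vertices to vertices, the two endpoints of any edge to the two endpoints
of an edge, and restricts to a label-preserving bijection between the colored
vertices. -/
def TreeHom {I : Type} (t t' : CTree I) (f : List ℕ → List ℕ) : Prop :=
  f [] = [] ∧
  (∀ p ∈ vertS t, f p ∈ vertS t') ∧
  (∀ p ∈ vertS t, p ≠ [] →
    (f p ≠ [] ∧ (f p).dropLast = f p.dropLast) ∨
    (f p.dropLast ≠ [] ∧ (f p.dropLast).dropLast = f p)) ∧
  (∀ p a, t.sub p = some (leaf a) → t'.sub (f p) = some (leaf a)) ∧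
  Set.BijOn f {p | ∃ a, t.sub p = some (leaf a)} {q | ∃ a, t'.sub q = some (leaf a)}

/-- A partition `P` of the label set is compatible with the colored tree `t` if there
exists a tree homomorphism `t → Γ_P`. -/
def Compatible {I : Type} (t : CTree I) (P : Finset (Finset I)) : Prop :=
  ∃ f, TreeHom t (gammaP P) f

/-- `C_y ⊆ I` : the labels of the colored vertices whose path from the root contains
the edge `y`. -/
def Cy {I : Type} [Fintype I] [DecidableEq I] (t : CTree I) (y : List ℕ) : Finset I :=
  Finset.univ.filter (fun a => ∃ p, t.sub p = some (leaf a) ∧ y <+: p)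

end CTree

/-!
Write `F_S = ∑_{d ∈ S} w_d`. Since `w_d = s_v - s_{v'}` for an edge `d` from `v` down to `v'`,
weights telescope along a path, and `s_c = 0` for a colored vertex `c`; hence `A ∼ B` implies
`F_A = F_B`.

Conversely, at an uncolored vertex `u ≠ v₀`, `F_S(e_u) - F_S(e_{parent u})` is the number of
edges of `S` leaving `u` minus the multiplicity of the edge entering `u`. So if `F_A = F_B` with
`A`, `B` disjoint, every edge of `A` ending at an uncolored vertex is followed by an edge of `A`,
and from any edge of `A` a path inside `A` runs down to a colored vertex. At the upper endpoint
`v` of a shortest edge of `A + B`, `F_S(e_v)` just counts the edges of `S` leaving `v`, so `A`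
and `B` both contain an edge leaving `v`. The two resulting paths from `v` form a pair
`A₁ ∼ B₁`; remove it and induct on `|A| + |B|`.
-/

theorem List.prefix_iff_prefix_dropLast_or_eq {β : Type*} {p u : List β} (hu : u ≠ []) :
    p <+: u ↔ p <+: u.dropLast ∨ p = u := by
  conv_lhs => rw [← List.dropLast_append_getLast hu]
  rw [List.prefix_concat_iff, List.dropLast_append_getLast hu, or_comm]

theorem List.length_dropLast_lt {β : Type*} {l : List β} (hl : l ≠ []) :
    l.dropLast.length < l.length := by
  rw [List.length_dropLast]
  exact Nat.sub_lt (List.length_pos_iff.mpr hl) one_pos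

theorem Multiset.countP_prefix_eq_countP_prefix_dropLast_add {β γ : Type*} [DecidableEq β]
    {u : List β} (hu : u ≠ []) (f : γ → List β) (S : Multiset γ) :
    S.countP (f · <+: u) = S.countP (f · <+: u.dropLast) + S.countP (f · = u) := by
  have hu' : ¬u <+: u.dropLast := fun h => (List.length_dropLast_lt hu).not_ge h.length_le
  induction S using Multiset.induction with
  | empty => simp
  | cons x S ih =>
    rw [Multiset.countP_cons, Multiset.countP_cons, Multiset.countP_cons, ih]
    by_cases h₁ : f x <+: u.dropLast <;> by_cases h₂ : f x = u
    · exact absurd (h₂ ▸ h₁) hu'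
    all_goals simp [h₁, h₂, hu', List.prefix_iff_prefix_dropLast_or_eq hu] <;> omega

namespace CTree

variable {α : Type} {t : CTree α}

lemma one_le_sizeOf (s : CTree α) : 1 ≤ sizeOf s := by
  cases s <;> simp

lemma length_lt_sizeOf (ts : List (CTree α)) : ts.length < sizeOf ts := by
  induction ts with
  | nil => simp
  | cons a l ih => have := one_le_sizeOf a; simp at *; omega

lemma sub_node_cons (ts : List (CTree α)) (i : ℕ) (p : List ℕ) :
    sub (node ts) (i :: p) = ts[i]?.bind (sub · p) := by
  simp only [sub]
  cases ts[i]? <;> rfl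

lemma sub_append (p q : List ℕ) : sub t (p ++ q) = (sub t p).bind (sub · q) := by
  induction p generalizing t with
  | nil => simp [sub]
  | cons i p ih =>
    cases t with
    | leaf a => simp [sub]
    | node ts => cases h : ts[i]? <;> simp [sub_node_cons, h, ih]

lemma length_add_sizeOf_le_of_sub_eq_some {s : CTree α} {p : List ℕ}
    (h : t.sub p = some s) : p.length + sizeOf s ≤ sizeOf t ∧ ∀ i ∈ p, i < sizeOf t := by
  induction p generalizing t with
  | nil => cases h; simp
  | cons i q ih =>
    cases t with
    | leaf a => simp [sub] at h
    | node ts =>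
      obtain ⟨c, hc, hs⟩ := Option.bind_eq_some_iff.mp ((sub_node_cons ts i q).symm.trans h)
      obtain ⟨hi, rfl⟩ := List.getElem?_eq_some_iff.mp hc
      have hsz := List.sizeOf_lt_of_mem (List.getElem_mem hi)
      have hlen := length_lt_sizeOf ts
      obtain ⟨h1, h2⟩ := ih hs
      simp only [node.sizeOf_spec, List.length_cons, List.forall_mem_cons]
      exact ⟨by omega, by omega, fun j hj => by have := h2 j hj; omega⟩

lemma mem_allLists {m k : ℕ} {p : List ℕ} (hk : p.length ≤ k) (hm : ∀ i ∈ p, i < m) :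
    p ∈ allLists m k := by
  induction k generalizing p with
  | zero => simp_all [allLists]
  | succ k ih =>
    cases p with
    | nil => simp [allLists]
    | cons i q =>
      simp only [List.forall_mem_cons, List.length_cons] at hm hk
      simp only [allLists, List.mem_cons, List.mem_flatMap, List.mem_range, List.mem_map]
      exact Or.inr ⟨i, hm.1, q, ih (by omega) hm.2, rfl⟩

lemma mem_allLists_of_sub_eq_some {s : CTree α} {p : List ℕ} (h : t.sub p = some s) :
    p ∈ allLists (sizeOf t) (sizeOf t) := by
  obtain ⟨h1, h2⟩ := length_add_sizeOf_le_of_sub_eq_some h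
  have := one_le_sizeOf s
  exact mem_allLists (by omega) h2

lemma mem_vertS {p : List ℕ} : p ∈ vertS t ↔ (t.sub p).isSome := by
  simp only [vertS, Finset.mem_filter, List.mem_toFinset, and_iff_right_iff_imp]
  intro h
  obtain ⟨s, hs⟩ := Option.isSome_iff_exists.mp h
  exact mem_allLists_of_sub_eq_some hs

lemma mem_uncS {p : List ℕ} : p ∈ uncS t ↔ ∃ ts, t.sub p = some (node ts) := by
  simp only [uncS, Finset.mem_filter, List.mem_toFinset, and_iff_right_iff_imp]
  rintro ⟨ts, hs⟩
  exact mem_allLists_of_sub_eq_some hs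

lemma mem_colS {p : List ℕ} : p ∈ colS t ↔ ∃ a, t.sub p = some (leaf a) := by
  simp only [colS, Finset.mem_filter, List.mem_toFinset, and_iff_right_iff_imp]
  rintro ⟨a, hs⟩
  exact mem_allLists_of_sub_eq_some hs

lemma mem_edgeS {p : List ℕ} : p ∈ edgeS t ↔ p ≠ [] ∧ (t.sub p).isSome := by
  simp [edgeS, mem_vertS]

lemma uncS_subset_vertS : uncS t ⊆ vertS t := fun p hp => by
  obtain ⟨ts, hs⟩ := mem_uncS.mp hp
  simp [mem_vertS, hs]

lemma colS_subset_vertS : colS t ⊆ vertS t := fun p hp => by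
  obtain ⟨a, hs⟩ := mem_colS.mp hp
  simp [mem_vertS, hs]

lemma mem_vertS_of_prefix {p q : List ℕ} (hp : p ∈ vertS t) (hq : q <+: p) :
    q ∈ vertS t := by
  obtain ⟨r, rfl⟩ := hq
  rw [mem_vertS, sub_append] at *
  cases hs : sub t q <;> simp_all

lemma dropLast_mem_uncS {p : List ℕ} (hp : p ∈ edgeS t) : p.dropLast ∈ uncS t := by
  obtain ⟨hp₀, hp⟩ := mem_edgeS.mp hp
  rw [← List.dropLast_append_getLast hp₀, sub_append] at hp
  rw [mem_uncS]
  cases hs : sub t p.dropLast with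
  | none => simp [hs] at hp
  | some c =>
    cases c with
    | leaf a => simp [hs, sub] at hp
    | node ts => exact ⟨ts, rfl⟩

lemma mem_pathEdges {v c d : List ℕ} :
    d ∈ pathEdges t v c ↔ d ∈ edgeS t ∧ v <+: d ∧ d ≠ v ∧ d <+: c := by
  simp [pathEdges]

lemma pathEdges_self (v : List ℕ) : pathEdges t v v = 0 := by
  refine Multiset.eq_zero_of_forall_notMem fun d hd => ?_
  obtain ⟨-, hvd, hdv, hdv'⟩ := mem_pathEdges.mp hd
  exact hdv (hdv'.eq_of_length (le_antisymm hdv'.length_le hvd.length_le))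

lemma pathEdges_eq_cons {v c : List ℕ} (hc : c ∈ edgeS t) (hv : v <+: c.dropLast) :
    pathEdges t v c = c ::ₘ pathEdges t v c.dropLast := by
  have hc₀ := (mem_edgeS.mp hc).1
  have hlt := List.length_dropLast_lt hc₀
  have hvc : c ≠ v := fun h => by subst h; have := hv.length_le; omega
  have hcc : c ∉ (edgeS t).filter (fun d => v <+: d ∧ d ≠ v ∧ d <+: c.dropLast) :=
    fun h => by have := (Finset.mem_filter.mp h).2.2.2.length_le; omega
  rw [pathEdges, pathEdges, ← Finset.cons_val hcc]
  congr 1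
  ext d
  simp only [Finset.mem_filter, Finset.mem_cons, List.prefix_iff_prefix_dropLast_or_eq hc₀]
  constructor
  · rintro ⟨hd, hvd, hdv, hdc | rfl⟩
    exacts [Or.inr ⟨hd, hvd, hdv, hdc⟩, Or.inl rfl]
  · rintro (rfl | ⟨hd, hvd, hdv, hdc⟩)
    exacts [⟨hc, hv.trans (List.dropLast_prefix _), hvc, Or.inr rfl⟩,
      ⟨hd, hvd, hdv, Or.inl hdc⟩]

lemma mem_pathEdges_dropLast {e c : List ℕ} (he : e ∈ edgeS t) (hc : e <+: c) :
    e ∈ pathEdges t e.dropLast c := by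
  have hlt := List.length_dropLast_lt (mem_edgeS.mp he).1
  exact mem_pathEdges.mpr
    ⟨he, List.dropLast_prefix e, fun h => hlt.ne (congrArg List.length h.symm), hc⟩

lemma wt_eq_sv_sub (d : List ℕ) : wt t d = sv t d.dropLast - sv t d := by
  funext u
  have hpre : d <+: u → d.dropLast <+: u := (List.dropLast_prefix d).trans
  simp only [wt, sv, Pi.sub_apply]
  by_cases h₁ : u ∈ uncS t <;> by_cases h₂ : d <+: u <;> by_cases h₃ : d.dropLast <+: u <;>
    simp_all

lemma sv_eq_zero_of_mem_colS {c : List ℕ} (hc : c ∈ colS t) : sv t c = 0 := by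
  funext u
  simp only [sv, Pi.zero_apply, ite_eq_right_iff, and_imp]
  rintro hu ⟨r, rfl⟩
  obtain ⟨a, ha⟩ := mem_colS.mp hc
  obtain ⟨ts, hts⟩ := mem_uncS.mp hu
  rw [sub_append, ha] at hts
  cases r <;> simp [sub] at hts

lemma sum_map_wt_pathEdges {v c : List ℕ} (hc : c ∈ vertS t) (hv : v <+: c) :
    ((pathEdges t v c).map (wt t)).sum = sv t v - sv t c := by
  obtain ⟨r, rfl⟩ := hv
  induction r using List.reverseRecOn with
  | nil => simp [pathEdges_self]
  | append_singleton r i ih =>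
    rw [← List.append_assoc] at hc ⊢
    have hcE : v ++ r ++ [i] ∈ edgeS t := mem_edgeS.mpr ⟨by simp, mem_vertS.mp hc⟩
    rw [pathEdges_eq_cons hcE (by simp), Multiset.map_cons, Multiset.sum_cons, List.dropLast_concat,
      ih (mem_vertS_of_prefix hc (List.prefix_append _ _)), wt_eq_sv_sub, List.dropLast_concat]
    abel

lemma Sim.sum_map_wt_eq {P Q : Multiset (List ℕ)} (h : Sim t P Q) :
    (P.map (wt t)).sum = (Q.map (wt t)).sum := by
  obtain ⟨v, -, c₁, hc₁, c₂, hc₂, hv₁, hv₂, rfl, rfl⟩ := h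
  rw [sum_map_wt_pathEdges (colS_subset_vertS hc₁) hv₁,
    sum_map_wt_pathEdges (colS_subset_vertS hc₂) hv₂,
    sv_eq_zero_of_mem_colS hc₁, sv_eq_zero_of_mem_colS hc₂]

lemma sum_map_wt_sum_fst_eq_sum_snd (l : List (Multiset (List ℕ) × Multiset (List ℕ)))
    (hl : ∀ pr ∈ l, Sim t pr.1 pr.2) :
    (((l.map Prod.fst).sum).map (wt t)).sum = (((l.map Prod.snd).sum).map (wt t)).sum := by
  induction l with
  | nil => simp
  | cons pr l ih =>
    rw [List.forall_mem_cons] at hl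
    simp only [List.map_cons, List.sum_cons, Multiset.map_add, Multiset.sum_add,
      hl.1.sum_map_wt_eq, ih hl.2]

lemma wt_apply_of_mem_uncS {u : List ℕ} (hu : u ∈ uncS t) (d : List ℕ) :
    wt t d u = (if d.dropLast <+: u then 1 else 0) - (if d <+: u then 1 else 0) := by
  simp [wt_eq_sv_sub, sv, hu]

lemma sum_map_wt_apply {u : List ℕ} (hu : u ∈ uncS t) (S : Multiset (List ℕ)) :
    (S.map (wt t)).sum u = S.countP (·.dropLast <+: u) - S.countP (· <+: u) := by
  induction S using Multiset.induction with
  | empty => simp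
  | cons d S ih =>
    rw [Multiset.map_cons, Multiset.sum_cons, Pi.add_apply, ih, wt_apply_of_mem_uncS hu,
      Multiset.countP_cons, Multiset.countP_cons]
    push_cast
    ring

lemma sum_map_wt_apply_sub_apply_dropLast {u : List ℕ} (hu : u ∈ uncS t)
    (hu₀ : u ≠ []) (S : Multiset (List ℕ)) :
    (S.map (wt t)).sum u - (S.map (wt t)).sum u.dropLast =
      S.countP (·.dropLast = u) - S.countP (· = u) := by
  have hp := dropLast_mem_uncS (mem_edgeS.mpr ⟨hu₀, mem_vertS.mp (uncS_subset_vertS hu)⟩)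
  rw [sum_map_wt_apply hu, sum_map_wt_apply hp,
    Multiset.countP_prefix_eq_countP_prefix_dropLast_add hu₀ List.dropLast,
    Multiset.countP_prefix_eq_countP_prefix_dropLast_add hu₀ (fun d => d)]
  push_cast
  ring

lemma sum_map_wt_apply_of_forall_length_lt {u : List ℕ} (hu : u ∈ uncS t)
    {S : Multiset (List ℕ)} (hS : ∀ d ∈ S, u.length < d.length) :
    (S.map (wt t)).sum u = S.countP (·.dropLast = u) := by
  have hnone : S.countP (· <+: u) = 0 := Multiset.countP_eq_zero.mpr fun d hd h => by
    have := h.length_le; have := hS d hd; omega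
  have hparent : S.countP (·.dropLast <+: u) = S.countP (·.dropLast = u) :=
    Multiset.countP_congr rfl fun d hd => propext ⟨fun h => h.eq_of_length (by
      have := h.length_le; have := hS d hd; have := List.length_dropLast (xs := d); omega),
      fun h => h ▸ List.prefix_refl _⟩
  rw [sum_map_wt_apply hu, hnone, hparent, Nat.cast_zero, sub_zero]

lemma exists_colored_path_le {A B : Multiset (List ℕ)}
    (hA : ∀ d ∈ A, d ∈ edgeS t) (hdisj : Disjoint A B)
    (hsum : (A.map (wt t)).sum = (B.map (wt t)).sum) {e : List ℕ} (he : e ∈ A) :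
    ∃ c ∈ colS t, e <+: c ∧ pathEdges t e.dropLast c ≤ A := by
  set x := e.dropLast
  have hx : pathEdges t x e ⊆ A := by
    rw [pathEdges_eq_cons (hA e he) (List.prefix_refl _), pathEdges_self]
    simpa using he
  obtain ⟨c, hc, hmax⟩ := (A.toFinset.filter fun c => e <+: c ∧ pathEdges t x c ⊆ A)
    |>.exists_max_image List.length ⟨e, by simp [he, hx]⟩
  simp only [Finset.mem_filter, Multiset.mem_toFinset, and_imp] at hc hmax
  obtain ⟨hcA, hec, hpath⟩ := hc
  obtain ⟨hc₀, hcv⟩ := mem_edgeS.mp (hA c hcA)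
  obtain ⟨s, hs⟩ := Option.isSome_iff_exists.mp hcv
  cases s with
  | leaf a =>
    exact ⟨c, mem_colS.mpr ⟨a, hs⟩, hec,
      (Multiset.le_iff_subset (Finset.nodup _)).mpr hpath⟩
  | node ts =>
    exfalso
    -- `c ∈ A` is not in `B`, so the balance at `c` yields a child edge of `c` in `A`,
    -- which would extend the path beyond the deepest one
    have hbal := sum_map_wt_apply_sub_apply_dropLast (mem_uncS.mpr ⟨ts, hs⟩) hc₀ A
    rw [hsum, sum_map_wt_apply_sub_apply_dropLast (mem_uncS.mpr ⟨ts, hs⟩) hc₀ B] at hbal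
    have hB : B.countP (· = c) = 0 :=
      Multiset.countP_eq_zero.mpr fun d hd hdc => Multiset.disjoint_left.mp hdisj hcA (hdc ▸ hd)
    have hA' : 0 < A.countP (· = c) := Multiset.countP_pos.mpr ⟨c, hcA, rfl⟩
    obtain ⟨e', he'A, he'c⟩ : ∃ e' ∈ A, e'.dropLast = c :=
      Multiset.countP_pos.mp (by omega)
    have hxc : x <+: e'.dropLast := he'c ▸ (List.dropLast_prefix e).trans hec
    have hle := hmax e' he'A (hec.trans (he'c ▸ List.dropLast_prefix e'))
      (by rw [pathEdges_eq_cons (hA e' he'A) hxc, he'c]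
          exact Multiset.cons_subset.mpr ⟨he'A, hpath⟩)
    have := List.length_dropLast_lt (mem_edgeS.mp (hA e' he'A)).1
    rw [he'c] at this
    omega

lemma exists_mem_mem_dropLast_eq {A B : Multiset (List ℕ)}
    (hA : ∀ d ∈ A, d ∈ edgeS t) (hB : ∀ d ∈ B, d ∈ edgeS t)
    (hsum : (A.map (wt t)).sum = (B.map (wt t)).sum) (hAB : A + B ≠ 0) :
    ∃ e₁ ∈ A, ∃ e₂ ∈ B, e₁.dropLast = e₂.dropLast := by
  obtain ⟨e, he, hmin⟩ := (A + B).toFinset.exists_min_image List.length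
    (Multiset.toFinset_nonempty.mpr hAB)
  rw [Multiset.mem_toFinset] at he
  set v := e.dropLast
  have heE : e ∈ edgeS t := (Multiset.mem_add.mp he).elim (hA e) (hB e)
  have hv : v ∈ uncS t := dropLast_mem_uncS heE
  have hlt : ∀ d ∈ A + B, v.length < d.length := fun d hd =>
    (List.length_dropLast_lt (mem_edgeS.mp heE).1).trans_le (hmin d (by simpa using hd))
  have hcount : A.countP (·.dropLast = v) = B.countP (·.dropLast = v) := by
    have := congrFun hsum v
    rwa [sum_map_wt_apply_of_forall_length_lt hv fun d hd => hlt d (Multiset.mem_add.mpr (.inl hd)),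
      sum_map_wt_apply_of_forall_length_lt hv fun d hd => hlt d (Multiset.mem_add.mpr (.inr hd)),
      Nat.cast_inj] at this
  have hpos : 0 < A.countP (·.dropLast = v) := by
    rcases Multiset.mem_add.mp he with h | h
    · exact Multiset.countP_pos.mpr ⟨e, h, rfl⟩
    · exact hcount ▸ Multiset.countP_pos.mpr ⟨e, h, rfl⟩
  obtain ⟨e₁, h₁, he₁⟩ := Multiset.countP_pos.mp hpos
  obtain ⟨e₂, h₂, he₂⟩ := Multiset.countP_pos.mp (hcount ▸ hpos)
  exact ⟨e₁, h₁, e₂, h₂, he₁.trans he₂.symm⟩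

lemma exists_sim_le {A B : Multiset (List ℕ)}
    (hA : ∀ d ∈ A, d ∈ edgeS t) (hB : ∀ d ∈ B, d ∈ edgeS t) (hdisj : Disjoint A B)
    (hsum : (A.map (wt t)).sum = (B.map (wt t)).sum) (hAB : A + B ≠ 0) :
    ∃ P Q, P ≠ 0 ∧ P ≤ A ∧ Q ≤ B ∧ Sim t P Q := by
  obtain ⟨e₁, h₁, e₂, h₂, he⟩ := exists_mem_mem_dropLast_eq hA hB hsum hAB
  obtain ⟨c₁, hc₁, he₁c, hP⟩ := exists_colored_path_le hA hdisj hsum h₁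
  obtain ⟨c₂, hc₂, he₂c, hQ⟩ := exists_colored_path_le hB hdisj.symm hsum.symm h₂
  have hv₁ : e₁.dropLast <+: c₁ := (List.dropLast_prefix _).trans he₁c
  have hv₂ : e₁.dropLast <+: c₂ := he ▸ (List.dropLast_prefix _).trans he₂c
  have hP₀ : pathEdges t e₁.dropLast c₁ ≠ 0 :=
    fun h => by simpa [h] using mem_pathEdges_dropLast (hA e₁ h₁) he₁c
  refine ⟨_, _, hP₀, hP, hQ, e₁.dropLast, mem_vertS_of_prefix (colS_subset_vertS hc₁) hv₁,
    c₁, hc₁, c₂, hc₂, hv₁, hv₂, rfl, by rw [he]⟩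

lemma exists_sim_partition_of_sum_map_wt_eq {A B : Multiset (List ℕ)}
    (hA : ∀ d ∈ A, d ∈ edgeS t) (hB : ∀ d ∈ B, d ∈ edgeS t) (hdisj : Disjoint A B)
    (hsum : (A.map (wt t)).sum = (B.map (wt t)).sum) :
    ∃ l : List (Multiset (List ℕ) × Multiset (List ℕ)),
      A = (l.map Prod.fst).sum ∧ B = (l.map Prod.snd).sum ∧ ∀ pr ∈ l, Sim t pr.1 pr.2 := by
  induction hn : Multiset.card (A + B) using Nat.strong_induction_on generalizing A B with
  | _ n ih =>
  by_cases hAB : A + B = 0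
  · obtain ⟨rfl, rfl⟩ := add_eq_zero.mp hAB
    exact ⟨[], rfl, rfl, by simp⟩
  obtain ⟨P, Q, hP, hPA, hQB, hPQ⟩ := exists_sim_le hA hB hdisj hsum hAB
  obtain ⟨A', rfl⟩ := exists_add_of_le hPA
  obtain ⟨B', rfl⟩ := exists_add_of_le hQB
  have hcard : Multiset.card (A' + B') < n := by
    have := Multiset.card_pos.mpr hP
    simp only [← hn, Multiset.card_add]
    omega
  simp only [Multiset.map_add, Multiset.sum_add, hPQ.sum_map_wt_eq, add_right_inj] at hsum
  obtain ⟨l, rfl, rfl, hl⟩ := ih _ hcard (fun d hd => hA d (Multiset.mem_add.mpr (.inr hd)))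
    (fun d hd => hB d (Multiset.mem_add.mpr (.inr hd))) (hdisj.mono le_add_self le_add_self)
    hsum rfl
  exact ⟨(P, Q) :: l, by simp, by simp, List.forall_mem_cons.mpr ⟨hPQ, hl⟩⟩

end CTree

open CTree in
theorem weight_sum_eq_iff_partition_into_sim_pairs_general
    {α : Type} (t : CTree α)
    (A B : Multiset (List ℕ)) (hA : ∀ d ∈ A, d ∈ edgeS t) (hB : ∀ d ∈ B, d ∈ edgeS t)
    (hdisj : Disjoint A B) :
    (A.map (wt t)).sum = (B.map (wt t)).sum ↔
      ∃ l : List (Multiset (List ℕ) × Multiset (List ℕ)),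
        A = (l.map Prod.fst).sum ∧ B = (l.map Prod.snd).sum ∧
          ∀ pr ∈ l, Sim t pr.1 pr.2 := by
  refine ⟨exists_sim_partition_of_sum_map_wt_eq hA hB hdisj, ?_⟩
  rintro ⟨l, rfl, rfl, hl⟩
  exact sum_map_wt_sum_fst_eq_sum_snd l hl

open CTree in
/-- For disjoint finite multisets `A`, `B` of edges of a colored tree
`Γ`, `∑_{d ∈ A} w_d = ∑_{d ∈ B} w_d` (with multiplicity, in `M`) if and only if `A` and
`B` can be partitioned into multisets `A₁, …, A_r` and `B₁, …, B_r` with `A_l ∼ B_l`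
for every `1 ≤ l ≤ r`. -/
theorem weight_sum_eq_iff_partition_into_sim_pairs
    {α : Type} (t : CTree α) (ht : t.IsColoredTree)
    (A B : Multiset (List ℕ)) (hA : ∀ d ∈ A, d ∈ edgeS t) (hB : ∀ d ∈ B, d ∈ edgeS t)
    (hdisj : Disjoint A B) :
    (A.map (wt t)).sum = (B.map (wt t)).sum ↔
      ∃ l : List (Multiset (List ℕ) × Multiset (List ℕ)),
        A = (l.map Prod.fst).sum ∧ B = (l.map Prod.snd).sum ∧
          ∀ pr ∈ l, Sim t pr.1 pr.2 :=
  weight_sum_eq_iff_partition_into_sim_pairs_general t A B hA hB hdisj
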